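/- arXiv:1602.05822 — 2 statements merged into one kernel-verified Lean document; each statement's English description precedes it below -/
import Mathlib

section
/- For all natural numbers N, A, t, the following identity holds in the integers: Σ_{k=0}^{N} k^t · (N)_k · S(A,k) = Σ C(t,u) · (-1)^v · S(v+w, v) · (N)_v · (N - v)^{u + A}, where the sum on the right ranges over all triples of natural numbers (u,v,w) with u + v + w = t, and (N - v) is interpreted as 0 when v > N. (Dividing both sides by N^A, the left side is the t-th raw moment of the number of unique original items in a bootstrap sample of A items drawn with replacement from N items.) -/
/-- Stirling numbers of the second kind: `stirling A k` is the number of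
partitions of a set of `A` labelled elements into exactly `k` nonempty
unlabelled blocks. -/
def stirling : ℕ → ℕ → ℕ
  | 0, 0 => 1
  | 0, _ + 1 => 0
  | _ + 1, 0 => 0
  | n + 1, k + 1 => (k + 1) * stirling n (k + 1) + stirling n k

lemma stirling_eq_zero_of_lt : ∀ n k, n < k → stirling n k = 0
  | 0, _ + 1, _ => rfl
  | n + 1, k + 1, h => by
    have h1 : n < k + 1 := by omega
    have h2 : n < k := by omega
    simp [stirling, stirling_eq_zero_of_lt n (k+1) h1, stirling_eq_zero_of_lt n k h2]

lemma sum_stirling_descFactorial (A x : ℕ) :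
    ∑ k ∈ Finset.range (A + 1), stirling A k * x.descFactorial k = x ^ A := by
  induction A with
  | zero => simp [stirling]
  | succ A ih =>
    have hmul : ∀ k, x * x.descFactorial k
        = x.descFactorial (k + 1) + k * x.descFactorial k := by
      intro k
      rcases le_or_gt (k+1) x with h | h
      · rw [Nat.descFactorial_succ]
        have h3 : x - k + k = x := by omega
        nth_rewrite 1 [← h3]
        ring
      · rcases Nat.lt_or_ge x k with h2 | h2
        · rw [Nat.descFactorial_eq_zero_iff_lt.2 h2,
            Nat.descFactorial_eq_zero_iff_lt.2 (by omega)]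
          simp
        · have hx : x = k := by omega
          subst hx
          rw [Nat.descFactorial_eq_zero_iff_lt.2 (show x < x + 1 by omega)]
          simp
    calc ∑ k ∈ Finset.range (A + 2), stirling (A+1) k * x.descFactorial k
        = ∑ k ∈ Finset.range (A + 1), stirling (A+1) (k+1) * x.descFactorial (k+1) := by
          rw [Finset.sum_range_succ' _ (A+1)]
          simp [stirling]
      _ = ∑ k ∈ Finset.range (A + 1),
            (k * stirling A k * x.descFactorial k
              + stirling A k * x.descFactorial (k+1)) := by
          rw [show (∑ k ∈ Finset.range (A + 1),
                (k * stirling A k * x.descFactorial k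
                  + stirling A k * x.descFactorial (k+1)))
              = ∑ k ∈ Finset.range (A + 1),
                (k * stirling A k * x.descFactorial k)
              + ∑ k ∈ Finset.range (A + 1),
                (stirling A k * x.descFactorial (k+1)) from Finset.sum_add_distrib]
          rw [show (∑ k ∈ Finset.range (A + 1), k * stirling A k * x.descFactorial k)
              = ∑ k ∈ Finset.range (A + 1),
                  (k+1) * stirling A (k+1) * x.descFactorial (k+1) by
            rw [Finset.sum_range_succ'
              (fun k => k * stirling A k * x.descFactorial k) A,
              Finset.sum_range_succ
              (fun k => (k+1) * stirling A (k+1) * x.descFactorial (k+1)) A]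
            simp [stirling_eq_zero_of_lt A (A+1) (by omega)]]
          rw [← Finset.sum_add_distrib]
          apply Finset.sum_congr rfl; intro k _
          simp [stirling]; ring
      _ = x ^ (A + 1) := by
          rw [pow_succ, ← ih, Finset.sum_mul]
          apply Finset.sum_congr rfl; intro k _
          have h4 : stirling A k * x.descFactorial k * x
              = stirling A k * (x * x.descFactorial k) := by ring
          rw [h4, hmul k]
          ring

lemma surj_formula : ∀ (n v : ℕ),
    ((v.factorial * stirling n v : ℕ) : ℤ)
      = ∑ i ∈ Finset.range (v+1), (-1)^i * (v.choose i : ℤ) * ((v - i : ℕ) : ℤ)^n := by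
  intro n
  induction n with
  | zero =>
    intro v
    cases v with
    | zero => simp [stirling]
    | succ v' =>
      simp only [pow_zero, mul_one, Int.alternating_sum_range_choose]
      rw [if_neg (by omega)]
      simp [stirling]
  | succ n ih =>
    intro v
    cases v with
    | zero => simp [stirling]
    | succ v' =>
      set V := v' + 1 with hV
      have hsplit : ∑ i ∈ Finset.range (V+1), (-1)^i * (V.choose i : ℤ) * ((V - i : ℕ) : ℤ)^(n+1)
          = (V:ℤ) * (∑ i ∈ Finset.range (V+1), (-1)^i * (V.choose i : ℤ) * ((V - i : ℕ) : ℤ)^n)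
            - ∑ i ∈ Finset.range (V+1), (-1)^i * (V.choose i : ℤ) * (i : ℤ) * ((V - i : ℕ) : ℤ)^n := by
        rw [Finset.mul_sum, ← Finset.sum_sub_distrib]
        apply Finset.sum_congr rfl
        intro i hi
        have hiV : i ≤ V := by simpa [Nat.lt_succ_iff] using Finset.mem_range.mp hi
        have hc : ((V - i : ℕ) : ℤ) = (V:ℤ) - i := by
          push_cast [hiV]; ring
        rw [pow_succ]
        rw [hc]
        ring
      have hsecond : ∑ i ∈ Finset.range (V+1), (-1)^i * (V.choose i : ℤ) * (i : ℤ) * ((V - i : ℕ) : ℤ)^n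
          = -((V:ℤ) * (∑ k ∈ Finset.range (v'+1), (-1)^k * (v'.choose k : ℤ) * ((v' - k : ℕ) : ℤ)^n)) := by
        rw [Finset.sum_range_succ'
          (fun i => (-1:ℤ)^i * (V.choose i : ℤ) * (i : ℤ) * ((V - i : ℕ) : ℤ)^n) V]
        simp only [Nat.cast_zero, mul_zero, zero_mul, add_zero, Nat.sub_zero]
        rw [Finset.mul_sum, ← Finset.sum_neg_distrib]
        apply Finset.sum_congr rfl
        intro k hk
        have h2 : V.choose (k+1) * (k+1) = V * v'.choose k :=
          (Nat.add_one_mul_choose_eq v' k).symm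
        have h1 : (V.choose (k+1) : ℤ) * ((k:ℤ)+1) = (V:ℤ) * (v'.choose k : ℤ) := by
          exact_mod_cast congrArg (Nat.cast : ℕ → ℤ) h2
        have h3 : V - (k+1) = v' - k := by omega
        rw [h3]
        push_cast at h1 ⊢
        linear_combination (-(-1:ℤ)^k * ((v' - k : ℕ):ℤ)^n) * h1
      rw [hsplit, hsecond, ← ih V, ← ih v']
      have hSt : (V.factorial * stirling (n+1) V : ℕ)
          = V * (V.factorial * stirling n V) + V * (v'.factorial * stirling n v') := by
        show V.factorial * stirling (n+1) (v'+1) = _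
        have : stirling (n+1) (v'+1) = (v'+1) * stirling n (v'+1) + stirling n v' := rfl
        rw [this]
        have hf : V.factorial = V * v'.factorial := Nat.factorial_succ v'
        rw [hf]
        ring
      rw [hSt]
      push_cast
      ring

lemma alt_choose_sum (M m i : ℕ) (hm : m ≤ M) :
    ∑ v ∈ Finset.range (M+1), (-1:ℤ)^v * (m.choose v : ℤ) * (v.choose i : ℤ)
      = if i = m then (-1:ℤ)^m else 0 := by
  rcases le_or_gt i m with him | him
  · have hiM : i ≤ M + 1 := by omega
    rw [← Finset.sum_range_add_sum_Ico _ hiM]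
    have hz : ∑ v ∈ Finset.range i, (-1:ℤ)^v * (m.choose v : ℤ) * (v.choose i : ℤ) = 0 := by
      apply Finset.sum_eq_zero
      intro v hv
      rw [Nat.choose_eq_zero_of_lt (Finset.mem_range.mp hv)]
      simp
    rw [hz, zero_add, Finset.sum_Ico_eq_sum_range]
    have hterm : ∀ j, ((m.choose (i+j)) * ((i+j).choose i) : ℤ)
        = (m.choose i : ℤ) * ((m-i).choose j : ℤ) := by
      intro j
      rcases le_or_gt (i+j) m with h | h
      · have := Nat.choose_mul (n := m) (Nat.le_add_right i j)
        have h2 : (i + j) - i = j := by omega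
        rw [h2] at this
        exact_mod_cast congrArg (Nat.cast : ℕ → ℤ) this
      · rw [Nat.choose_eq_zero_of_lt h, Nat.choose_eq_zero_of_lt (show m - i < j by omega)]
        push_cast; ring
    have hstep : ∑ j ∈ Finset.range (M+1-i), (-1:ℤ)^(i+j) * (m.choose (i+j) : ℤ) * ((i+j).choose i : ℤ)
        = (-1:ℤ)^i * (m.choose i : ℤ) *
            ∑ j ∈ Finset.range (M+1-i), (-1:ℤ)^j * ((m-i).choose j : ℤ) := by
      rw [Finset.mul_sum]
      apply Finset.sum_congr rfl
      intro j _
      have h4 : (-1:ℤ)^(i+j) = (-1:ℤ)^i * (-1:ℤ)^j := pow_add _ _ _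
      calc (-1:ℤ)^(i+j) * (m.choose (i+j) : ℤ) * ((i+j).choose i : ℤ)
          = (-1:ℤ)^(i+j) * ((m.choose (i+j) : ℤ) * ((i+j).choose i : ℤ)) := by ring
        _ = _ := by rw [hterm j, h4]; ring
    rw [hstep]
    have htrunc : ∑ j ∈ Finset.range (M+1-i), (-1:ℤ)^j * ((m-i).choose j : ℤ)
        = ∑ j ∈ Finset.range ((m-i)+1), (-1:ℤ)^j * ((m-i).choose j : ℤ) := by
      symm
      apply Finset.sum_subset
      · intro x hx
        simp only [Finset.mem_range] at *
        omega
      · intro x _ hx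
        simp only [Finset.mem_range, not_lt] at hx
        rw [Nat.choose_eq_zero_of_lt (by omega)]
        simp
    rw [htrunc, Int.alternating_sum_range_choose]
    rcases eq_or_lt_of_le him with he | hlt
    · subst he
      rw [if_pos (by omega), if_pos rfl, Nat.choose_self]
      simp
    · rw [if_neg (by omega), if_neg (by omega)]
      simp
  · rw [if_neg (by omega)]
    apply Finset.sum_eq_zero
    intro v hv
    rcases le_or_gt v m with h | h
    · rw [Nat.choose_eq_zero_of_lt (show v < i by omega)]; simp
    · rw [Nat.choose_eq_zero_of_lt h]; simp

lemma key (N m t : ℕ) (hmN : m ≤ N) :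
    ((N - m : ℕ) : ℤ)^t
      = ∑ u ∈ Finset.range (t+1), ∑ v ∈ Finset.range (t-u+1),
          (t.choose u : ℤ) * (-1)^v * (stirling (t-u) v : ℤ) *
            (m.descFactorial v : ℤ) * ((N - v : ℕ) : ℤ)^u := by
  set T := t + m with hT
  -- Step 1: extend inner range to T+1
  have step1 : ∑ u ∈ Finset.range (t+1), ∑ v ∈ Finset.range (t-u+1),
        (t.choose u : ℤ) * (-1)^v * (stirling (t-u) v : ℤ) *
          (m.descFactorial v : ℤ) * ((N - v : ℕ) : ℤ)^u
      = ∑ u ∈ Finset.range (t+1), ∑ v ∈ Finset.range (T+1),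
        (t.choose u : ℤ) * (-1)^v * (stirling (t-u) v : ℤ) *
          (m.descFactorial v : ℤ) * ((N - v : ℕ) : ℤ)^u := by
    apply Finset.sum_congr rfl
    intro u hu
    apply Finset.sum_subset
    · intro x hx
      simp only [Finset.mem_range] at *
      omega
    · intro x _ hx
      simp only [Finset.mem_range, not_lt] at hx
      rw [stirling_eq_zero_of_lt (t-u) x (by omega)]
      simp
  rw [step1, Finset.sum_comm]
  -- Step 2: evaluate inner u-sum for each v
  have step2 : ∀ v ∈ Finset.range (T+1),
      ∑ u ∈ Finset.range (t+1),
        (t.choose u : ℤ) * (-1)^v * (stirling (t-u) v : ℤ) *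
          (m.descFactorial v : ℤ) * ((N - v : ℕ) : ℤ)^u
      = (-1:ℤ)^v * (m.choose v : ℤ) *
          ∑ i ∈ Finset.range (v+1), (-1:ℤ)^i * (v.choose i : ℤ) * ((N - i : ℕ) : ℤ)^t := by
    intro v _
    rcases le_or_gt v N with hvN | hvN
    · have hdf : ((m.descFactorial v : ℕ) : ℤ)
          = (v.factorial : ℤ) * (m.choose v : ℤ) := by
        exact_mod_cast congrArg (Nat.cast : ℕ → ℤ)
          (Nat.descFactorial_eq_factorial_mul_choose m v)
      have e1 : ∀ u, (t.choose u : ℤ) * (-1)^v * (stirling (t-u) v : ℤ) *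
            (m.descFactorial v : ℤ) * ((N - v : ℕ) : ℤ)^u
          = ∑ i ∈ Finset.range (v+1),
              (t.choose u : ℤ) * (-1)^v * (m.choose v : ℤ) * ((-1:ℤ)^i * (v.choose i : ℤ)) *
                (((v - i : ℕ) : ℤ)^(t-u) * ((N - v : ℕ) : ℤ)^u) := by
        intro u
        have h5 : (t.choose u : ℤ) * (-1)^v * (stirling (t-u) v : ℤ) *
              (m.descFactorial v : ℤ) * ((N - v : ℕ) : ℤ)^u
            = (t.choose u : ℤ) * (-1)^v * (m.choose v : ℤ) * ((N - v : ℕ) : ℤ)^u *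
              ((v.factorial * stirling (t-u) v : ℕ) : ℤ) := by
          rw [hdf]; push_cast; ring
        rw [h5, surj_formula (t-u) v, Finset.mul_sum]
        apply Finset.sum_congr rfl
        intro i _
        ring
      simp only [e1]
      rw [Finset.sum_comm, Finset.mul_sum]
      apply Finset.sum_congr rfl
      intro i hi
      have hiv : i ≤ v := by simpa [Nat.lt_succ_iff] using Finset.mem_range.mp hi
      have hbin : ∑ u ∈ Finset.range (t+1),
            ((N - v : ℕ) : ℤ)^u * ((v - i : ℕ) : ℤ)^(t-u) * (t.choose u : ℤ)
          = (((N - v : ℕ) : ℤ) + ((v - i : ℕ) : ℤ))^t := (add_pow _ _ t).symm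
      have hcast : ((N - v : ℕ) : ℤ) + ((v - i : ℕ) : ℤ) = ((N - i : ℕ) : ℤ) := by
        rw [Nat.cast_sub hvN, Nat.cast_sub hiv, Nat.cast_sub (le_trans hiv hvN)]
        ring
      calc ∑ u ∈ Finset.range (t+1),
            (t.choose u : ℤ) * (-1)^v * (m.choose v : ℤ) * ((-1:ℤ)^i * (v.choose i : ℤ)) *
              (((v - i : ℕ) : ℤ)^(t-u) * ((N - v : ℕ) : ℤ)^u)
          = ((-1:ℤ)^v * (m.choose v : ℤ)) * ((-1:ℤ)^i * (v.choose i : ℤ)) *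
              ∑ u ∈ Finset.range (t+1),
                ((N - v : ℕ) : ℤ)^u * ((v - i : ℕ) : ℤ)^(t-u) * (t.choose u : ℤ) := by
            rw [Finset.mul_sum]
            apply Finset.sum_congr rfl
            intro u _
            ring
        _ = _ := by rw [hbin, hcast]; ring
    · -- v > N ≥ m : both sides vanish
      have hdv : m.descFactorial v = 0 :=
        Nat.descFactorial_eq_zero_iff_lt.2 (by omega)
      have hcv : m.choose v = 0 := Nat.choose_eq_zero_of_lt (by omega)
      rw [hcv]
      simp only [hdv, Nat.cast_zero, mul_zero, zero_mul, Finset.sum_const_zero]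
  rw [Finset.sum_congr rfl step2]
  -- Step 3: extend i-range, swap, apply alt_choose_sum
  have step3 : ∀ v ∈ Finset.range (T+1),
      (-1:ℤ)^v * (m.choose v : ℤ) *
          ∑ i ∈ Finset.range (v+1), (-1:ℤ)^i * (v.choose i : ℤ) * ((N - i : ℕ) : ℤ)^t
      = ∑ i ∈ Finset.range (T+1),
          (-1:ℤ)^v * (m.choose v : ℤ) * ((-1:ℤ)^i * (v.choose i : ℤ) * ((N - i : ℕ) : ℤ)^t) := by
    intro v hv
    rw [Finset.mul_sum]
    apply Finset.sum_subset
    · intro x hx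
      simp only [Finset.mem_range] at *
      omega
    · intro x _ hx
      simp only [Finset.mem_range, not_lt] at hx
      rw [Nat.choose_eq_zero_of_lt (show v < x by omega)]
      simp
  rw [Finset.sum_congr rfl step3, Finset.sum_comm]
  have step4 : ∀ i ∈ Finset.range (T+1),
      ∑ v ∈ Finset.range (T+1),
        (-1:ℤ)^v * (m.choose v : ℤ) * ((-1:ℤ)^i * (v.choose i : ℤ) * ((N - i : ℕ) : ℤ)^t)
      = if i = m then ((-1:ℤ)^i * (-1:ℤ)^m * ((N - i : ℕ) : ℤ)^t) else 0 := by
    intro i _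
    have : ∑ v ∈ Finset.range (T+1),
        (-1:ℤ)^v * (m.choose v : ℤ) * ((-1:ℤ)^i * (v.choose i : ℤ) * ((N - i : ℕ) : ℤ)^t)
      = ((-1:ℤ)^i * ((N - i : ℕ) : ℤ)^t) *
          ∑ v ∈ Finset.range (T+1), (-1:ℤ)^v * (m.choose v : ℤ) * (v.choose i : ℤ) := by
      rw [Finset.mul_sum]
      apply Finset.sum_congr rfl
      intro v _
      ring
    rw [this, alt_choose_sum T m i (by omega)]
    split
    · ring
    · ring
  rw [Finset.sum_congr rfl step4, Finset.sum_ite_eq' (Finset.range (T+1)) m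
    (fun i => (-1:ℤ)^i * (-1:ℤ)^m * ((N - i : ℕ) : ℤ)^t),
    if_pos (Finset.mem_range.mpr (by omega))]
  rw [← pow_add, ← two_mul, pow_mul]
  norm_num

lemma sum_stirling_descFactorial' (A M x : ℕ) (hx : x ≤ M) :
    ∑ k ∈ Finset.range (M + 1), stirling A k * x.descFactorial k = x ^ A := by
  rcases le_or_gt A M with h | h
  · rw [← sum_stirling_descFactorial A x]
    symm
    apply Finset.sum_subset
    · intro y hy
      simp only [Finset.mem_range] at *
      omega
    · intro y _ hy
      simp only [Finset.mem_range, not_lt] at hy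
      rw [stirling_eq_zero_of_lt A y (by omega)]
      simp
  · rw [← sum_stirling_descFactorial A x]
    apply Finset.sum_subset
    · intro y hy
      simp only [Finset.mem_range] at *
      omega
    · intro y _ hy
      simp only [Finset.mem_range, not_lt] at hy
      rw [Nat.descFactorial_eq_zero_iff_lt.2 (by omega)]
      simp
    
lemma aux2 (N A v : ℕ) :
    ∑ k ∈ Finset.range (N+1), N.descFactorial k * stirling A k * (N-k).descFactorial v
      = N.descFactorial v * (N-v)^A := by
  have hswap : ∀ k, N.descFactorial k * (N-k).descFactorial v
      = N.descFactorial v * (N-v).descFactorial k := by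
    intro k
    have h1 := Nat.descFactorial_mul_descFactorial (n := N) (k := k) (m := k + v)
      (Nat.le_add_right k v)
    have h2 := Nat.descFactorial_mul_descFactorial (n := N) (k := v) (m := v + k)
      (Nat.le_add_right v k)
    rw [show k + v - k = v by omega] at h1
    rw [show v + k - v = k by omega] at h2
    rw [show v + k = k + v by omega] at h2
    rw [mul_comm, h1, ← h2, mul_comm]
  calc ∑ k ∈ Finset.range (N+1), N.descFactorial k * stirling A k * (N-k).descFactorial v
      = N.descFactorial v * ∑ k ∈ Finset.range (N+1), stirling A k * (N-v).descFactorial k := by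
        rw [Finset.mul_sum]
        apply Finset.sum_congr rfl
        intro k _
        calc N.descFactorial k * stirling A k * (N-k).descFactorial v
            = stirling A k * (N.descFactorial k * (N-k).descFactorial v) := by ring
          _ = stirling A k * (N.descFactorial v * (N-v).descFactorial k) := by rw [hswap k]
          _ = N.descFactorial v * (stirling A k * (N-v).descFactorial k) := by ring
    _ = N.descFactorial v * (N-v)^A := by
        rw [sum_stirling_descFactorial' A N (N - v) (by omega)]

/-- `Σ_{k=0}^{N} k^t · (N)_k · S(A,k)
  = Σ_{u+v+w=t} C(t,u) · (-1)^v · S(v+w,v) · (N)_v · (N-v)^{u+A}`,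
where `N - v` is truncated subtraction (so it is `0` when `v > N`). Dividing
both sides by `N^A`, the left side is the `t`-th raw moment of the number of
unique original items in a bootstrap sample of `A` items drawn with
replacement from `N` items. -/
theorem raw_moment_formula (N A t : ℕ) :
    ∑ k ∈ Finset.range (N + 1),
        (k : ℤ) ^ t * N.descFactorial k * stirling A k
      = ∑ u ∈ Finset.range (t + 1), ∑ v ∈ Finset.range (t - u + 1),
          (t.choose u : ℤ) * (-1) ^ v * stirling (v + (t - u - v)) v *
            N.descFactorial v * ((N - v : ℕ) : ℤ) ^ (u + A) := by

  have e1 : ∀ k ∈ Finset.range (N + 1),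
      (k : ℤ) ^ t * N.descFactorial k * stirling A k
      = ∑ u ∈ Finset.range (t+1), ∑ v ∈ Finset.range (t-u+1),
          (t.choose u : ℤ) * (-1)^v * (stirling (t-u) v : ℤ) *
            ((N-k).descFactorial v : ℤ) * ((N - v : ℕ) : ℤ)^u *
            ((N.descFactorial k : ℤ) * (stirling A k : ℤ)) := by
    intro k hk
    have hkN : k ≤ N := by simpa [Nat.lt_succ_iff] using Finset.mem_range.mp hk
    have hk2 : ((N - (N - k) : ℕ) : ℤ) = (k : ℤ) := by
      have : N - (N - k) = k := by omega
      rw [this]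
    rw [show ((k:ℤ)^t * N.descFactorial k * stirling A k)
        = (((N - (N-k) : ℕ) : ℤ))^t * ((N.descFactorial k : ℤ) * (stirling A k : ℤ)) by
      rw [hk2]; ring]
    rw [key N (N-k) t (by omega), Finset.sum_mul]
    apply Finset.sum_congr rfl
    intro u _
    rw [Finset.sum_mul]
  rw [Finset.sum_congr rfl e1, Finset.sum_comm]
  apply Finset.sum_congr rfl
  intro u hu
  rw [Finset.sum_comm]
  apply Finset.sum_congr rfl
  intro v hv
  have hvu : v ≤ t - u := by simpa [Nat.lt_succ_iff] using Finset.mem_range.mp hv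
  have hst : v + (t - u - v) = t - u := by omega
  rw [hst]
  have e2 : ∑ k ∈ Finset.range (N+1),
      (t.choose u : ℤ) * (-1)^v * (stirling (t-u) v : ℤ) *
        ((N-k).descFactorial v : ℤ) * ((N - v : ℕ) : ℤ)^u *
        ((N.descFactorial k : ℤ) * (stirling A k : ℤ))
      = (t.choose u : ℤ) * (-1)^v * (stirling (t-u) v : ℤ) * ((N - v : ℕ) : ℤ)^u *
        ((∑ k ∈ Finset.range (N+1),
          N.descFactorial k * stirling A k * (N-k).descFactorial v : ℕ) : ℤ) := by
    push_cast
    rw [Finset.mul_sum]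
    apply Finset.sum_congr rfl
    intro k _
    ring
  rw [e2, aux2 N A v]
  push_cast
  rw [pow_add]
  ring
end

section
/- Let N ≥ 2 and A be natural numbers and let S be a subset of Fin N with |S| = N_s. Then the sum over all functions f : Fin A → Fin N of the square of the cardinality of (range f) ∩ S equals N_s·(N^A - (N-1)^A) + N_s·(N_s - 1)·(N^A - 2·(N-1)^A + (N-2)^A). Equivalently, the variance of the number of unique items from category S in a bootstrap sample of A items drawn with replacement from N items is N_s·(N_s-1)·(1-2/N)^A + N_s·(1-1/N)^A - N_s^2·(1-1/N)^{2A}. -/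
open Finset

lemma count_avoid (N A : ℕ) (T : Finset (Fin N)) :
    ∑ f : Fin A → Fin N, (if ∀ a, f a ∉ T then (1:ℤ) else 0)
      = ((Tᶜ.card : ℤ)) ^ A := by
  rw [Finset.sum_boole]
  norm_cast
  have h : (Finset.univ.filter (fun f : Fin A → Fin N => ∀ a, f a ∉ T)).card
      = Fintype.card {f : Fin A → Fin N // ∀ a, f a ∉ T} := by
    rw [Fintype.card_subtype]
  rw [h, Fintype.card_congr (Equiv.subtypePiEquivPi (p := fun _ x => x ∉ T)),
    Fintype.card_pi]
  simp [Fintype.card_subtype, Finset.filter_not, Finset.compl_eq_univ_sdiff]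

/-- For a category `S ⊆ Fin N` with `|S| = Ns`, the sum over all functions
`f : Fin A → Fin N` of the square of the cardinality of `(range f) ∩ S` equals
`Ns·(N^A - (N-1)^A) + Ns·(Ns - 1)·(N^A - 2·(N-1)^A + (N-2)^A)`; equivalently,
the variance of the number of unique items from category `S` in a bootstrap
sample of `A` items drawn with replacement from `N` items is
`Ns·(Ns-1)·(1-2/N)^A + Ns·(1-1/N)^A - Ns^2·(1-1/N)^{2A}`. -/
theorem sum_sq_card_range_inter (N A Ns : ℕ) (hN : 2 ≤ N) (S : Finset (Fin N))
    (hS : S.card = Ns) :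
    ∑ f : Fin A → Fin N, (((Finset.image f Finset.univ) ∩ S).card : ℤ) ^ 2
      = (Ns : ℤ) * ((N : ℤ) ^ A - ((N : ℤ) - 1) ^ A)
        + (Ns : ℤ) * ((Ns : ℤ) - 1) *
            ((N : ℤ) ^ A - 2 * ((N : ℤ) - 1) ^ A + ((N : ℤ) - 2) ^ A) := by
  classical
  subst hS
  -- card as sum of indicators
  have hcard : ∀ f : Fin A → Fin N,
      (((Finset.image f Finset.univ) ∩ S).card : ℤ)
        = ∑ s ∈ S, (if s ∈ Finset.image f Finset.univ then (1:ℤ) else 0) := by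
    intro f
    rw [Finset.inter_comm, ← Finset.filter_mem_eq_inter]
    push_cast [Finset.card_filter]
    rfl
  -- inner sum formula
  have key : ∀ s t : Fin N,
      ∑ f : Fin A → Fin N,
        (if s ∈ Finset.image f Finset.univ then (1:ℤ) else 0) *
        (if t ∈ Finset.image f Finset.univ then (1:ℤ) else 0)
      = (N:ℤ)^A - 2*((N:ℤ)-1)^A + ((({s,t} : Finset (Fin N))ᶜ.card : ℤ))^A := by
    intro s t
    have expand : ∀ f : Fin A → Fin N,
        (if s ∈ Finset.image f Finset.univ then (1:ℤ) else 0) *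
        (if t ∈ Finset.image f Finset.univ then (1:ℤ) else 0)
        = 1 - (if ∀ a, f a ∉ ({s} : Finset (Fin N)) then (1:ℤ) else 0)
            - (if ∀ a, f a ∉ ({t} : Finset (Fin N)) then (1:ℤ) else 0)
            + (if ∀ a, f a ∉ ({s,t} : Finset (Fin N)) then (1:ℤ) else 0) := by
      intro f
      have hs : (s ∈ Finset.image f Finset.univ) ↔ ¬ (∀ a, f a ∉ ({s} : Finset (Fin N))) := by
        simp [eq_comm]
      have ht : (t ∈ Finset.image f Finset.univ) ↔ ¬ (∀ a, f a ∉ ({t} : Finset (Fin N))) := by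
        simp [eq_comm]
      have hst : (∀ a, f a ∉ ({s,t} : Finset (Fin N))) ↔
          ((∀ a, f a ∉ ({s} : Finset (Fin N))) ∧ (∀ a, f a ∉ ({t} : Finset (Fin N)))) := by
        constructor
        · intro h; exact ⟨fun a => by have := h a; simp_all, fun a => by have := h a; simp_all⟩
        · intro ⟨h1, h2⟩ a; have := h1 a; have := h2 a; simp_all
      by_cases h1 : ∀ a, f a ∉ ({s} : Finset (Fin N)) <;>
        by_cases h2 : ∀ a, f a ∉ ({t} : Finset (Fin N))
      · rw [if_neg (fun h => hs.mp h h1), if_neg (fun h => ht.mp h h2), if_pos h1,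
          if_pos h2, if_pos (hst.mpr ⟨h1, h2⟩)]; ring
      · rw [if_neg (fun h => hs.mp h h1), if_pos (ht.mpr h2), if_pos h1, if_neg h2,
          if_neg (fun h => h2 (hst.mp h).2)]; ring
      · rw [if_pos (hs.mpr h1), if_neg (fun h => ht.mp h h2), if_neg h1, if_pos h2,
          if_neg (fun h => h1 (hst.mp h).1)]; ring
      · rw [if_pos (hs.mpr h1), if_pos (ht.mpr h2), if_neg h1, if_neg h2,
          if_neg (fun h => h1 (hst.mp h).1)]; ring
    simp only [expand]
    rw [Finset.sum_add_distrib, Finset.sum_sub_distrib, Finset.sum_sub_distrib,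
      count_avoid, count_avoid, count_avoid]
    have h1 : (({s} : Finset (Fin N))ᶜ.card : ℤ) = (N:ℤ) - 1 := by
      rw [Finset.card_compl]
      simp
      omega
    have h2 : (({t} : Finset (Fin N))ᶜ.card : ℤ) = (N:ℤ) - 1 := by
      rw [Finset.card_compl]
      simp
      omega
    rw [h1, h2]
    simp [Finset.card_univ]
    ring
  -- main computation
  simp only [hcard]
  have sq : ∀ f : Fin A → Fin N,
      (∑ s ∈ S, (if s ∈ Finset.image f Finset.univ then (1:ℤ) else 0))^2
      = ∑ s ∈ S, ∑ t ∈ S,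
        (if s ∈ Finset.image f Finset.univ then (1:ℤ) else 0) *
        (if t ∈ Finset.image f Finset.univ then (1:ℤ) else 0) := by
    intro f; rw [sq, Finset.sum_mul_sum]
  simp only [sq]
  rw [Finset.sum_comm]
  rw [Finset.sum_congr rfl (fun s _ => Finset.sum_comm)]
  simp only [key]
  -- now ∑ s ∈ S, ∑ t ∈ S, (N^A - 2(N-1)^A + (card {s,t}ᶜ)^A)
  have compl2 : ∀ s t : Fin N, s ≠ t →
      ((({s,t} : Finset (Fin N))ᶜ.card : ℤ)) = (N:ℤ) - 2 := by
    intro s t hst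
    rw [Finset.card_compl, Finset.card_insert_of_notMem (by simp [hst]), Finset.card_singleton]
    simp
    omega
  have compl1 : ∀ s : Fin N,
      ((({s,s} : Finset (Fin N))ᶜ.card : ℤ)) = (N:ℤ) - 1 := by
    intro s
    rw [Finset.insert_eq_self.2 (Finset.mem_singleton_self s), Finset.card_compl,
      Finset.card_singleton]
    simp
    omega
  have inner : ∀ s ∈ S, ∑ t ∈ S,
      ((N:ℤ)^A - 2*((N:ℤ)-1)^A + ((({s,t} : Finset (Fin N))ᶜ.card : ℤ))^A)
      = (S.card : ℤ) * ((N:ℤ)^A - 2*((N:ℤ)-1)^A)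
        + (((N:ℤ)-1)^A + ((S.card : ℤ) - 1) * ((N:ℤ)-2)^A) := by
    intro s hs
    rw [Finset.sum_add_distrib, Finset.sum_const, ← Finset.add_sum_erase _ _ hs, compl1]
    have : ∀ t ∈ S.erase s, ((({s,t} : Finset (Fin N))ᶜ.card : ℤ))^A = ((N:ℤ)-2)^A := by
      intro t ht
      rw [compl2 s t (Ne.symm (Finset.ne_of_mem_erase ht))]
    rw [Finset.sum_congr rfl this, Finset.sum_const, Finset.card_erase_of_mem hs]
    have hS1 : 1 ≤ S.card := Finset.card_pos.2 ⟨s, hs⟩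
    rw [nsmul_eq_mul, nsmul_eq_mul, Nat.cast_sub hS1]
    push_cast
    ring
  rw [Finset.sum_congr rfl inner, Finset.sum_const]
  ring
end
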